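/- Let U ⊆ ℝ² be open and connected, and let D be a torsion-free affine connection on U whose Ricci tensor ρ is symmetric (ρ_{12} = ρ_{21} on U), satisfies the projective flatness condition (D_{∂_1}ρ)(∂_2, ∂_k) = (D_{∂_2}ρ)(∂_1, ∂_k) for k = 1, 2, where (D_{∂_i}ρ)_{jk} = ∂_i ρ_{jk} − Σ_l Γ^l_{ij} ρ_{lk} − Σ_l Γ^l_{ik} ρ_{jl}, and whose Ricci tensor is non-degenerate, i.e. det(ρ_{ij})(p) ≠ 0 for every p ∈ U. If h : U → ℝ is smooth and satisfies the affine gradient Ricci soliton equation Hes_h(∂_i,∂_j) + 2ρ^{sym}_{ij} = 0 on U, then h is constant; i.e., no non-trivial affine gradient Ricci soliton exists on a projectively flat affine surface with non-degenerate Ricci tensor. -/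

import Mathlib

noncomputable section

/-- Points of the affine surface (local coordinates `(x¹,x²)`). -/
abbrev Pt2 := Fin 2 → ℝ

/-- Partial derivative `∂_{x^i}`. -/
def pd2 (i : Fin 2) (f : Pt2 → ℝ) (p : Pt2) : ℝ :=
  fderiv ℝ f p (Pi.single i 1)

/-- The Ricci tensor `ρ_{ij}` of the affine connection with Christoffel symbols `Γ^k_{ij}`:
`ρ_{ij} = Σ_k ∂_{x^k}Γ^k_{ij} − ∂_{x^i}(Σ_k Γ^k_{kj}) + Σ_{k,l}(Γ^k_{kl}Γ^l_{ij} − Γ^k_{il}Γ^l_{kj})`. -/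
def ricciD (Γ : Fin 2 → Fin 2 → Fin 2 → Pt2 → ℝ) (i j : Fin 2) (p : Pt2) : ℝ :=
  (∑ k : Fin 2, pd2 k (Γ k i j) p) - pd2 i (fun q => ∑ k : Fin 2, Γ k k j q) p
    + ∑ k : Fin 2, ∑ l : Fin 2, (Γ k k l p * Γ l i j p - Γ k i l p * Γ l k j p)

/-- The symmetric part `ρ^{sym}_{ij} = ½(ρ_{ij}+ρ_{ji})` of the Ricci tensor. -/
def ricciDSym (Γ : Fin 2 → Fin 2 → Fin 2 → Pt2 → ℝ) (i j : Fin 2) (p : Pt2) : ℝ :=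
  (ricciD Γ i j p + ricciD Γ j i p) / 2

/-- The affine Hessian `Hes_h(∂_i,∂_j) = ∂_i∂_j h − Σ_k Γ^k_{ij} ∂_k h`. -/
def hessD (Γ : Fin 2 → Fin 2 → Fin 2 → Pt2 → ℝ) (h : Pt2 → ℝ) (i j : Fin 2) (p : Pt2) : ℝ :=
  pd2 i (pd2 j h) p - ∑ k : Fin 2, Γ k i j p * pd2 k h p

/-- The covariant derivative of the Ricci tensor:
`(D_{∂_i}ρ)_{jk} = ∂_i ρ_{jk} − Σ_l Γ^l_{ij} ρ_{lk} − Σ_l Γ^l_{ik} ρ_{jl}`. -/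
def covRicciD (Γ : Fin 2 → Fin 2 → Fin 2 → Pt2 → ℝ) (i j k : Fin 2) (p : Pt2) : ℝ :=
  pd2 i (fun q => ricciD Γ j k q) p - (∑ l : Fin 2, Γ l i j p * ricciD Γ l k p)
    - ∑ l : Fin 2, Γ l i k p * ricciD Γ j l p

open ContDiff in
lemma aux_infty_add_one : ((⊤:ℕ∞) : WithTop ℕ∞) + 1 ≤ ((⊤:ℕ∞) : WithTop ℕ∞) := by norm_num

lemma pd2_congrOn {U : Set Pt2} (hU : IsOpen U) {f g : Pt2 → ℝ} (hfg : ∀ q ∈ U, f q = g q)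
    {p : Pt2} (hp : p ∈ U) (i : Fin 2) : pd2 i f p = pd2 i g p := by
  unfold pd2
  rw [Filter.EventuallyEq.fderiv_eq (Filter.eventuallyEq_of_mem (hU.mem_nhds hp) hfg)]

lemma pd2_add {f g : Pt2 → ℝ} {p : Pt2} (hf : DifferentiableAt ℝ f p)
    (hg : DifferentiableAt ℝ g p) (i : Fin 2) :
    pd2 i (fun q => f q + g q) p = pd2 i f p + pd2 i g p := by
  simp [pd2, fderiv_fun_add hf hg]

lemma pd2_sub {f g : Pt2 → ℝ} {p : Pt2} (hf : DifferentiableAt ℝ f p)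
    (hg : DifferentiableAt ℝ g p) (i : Fin 2) :
    pd2 i (fun q => f q - g q) p = pd2 i f p - pd2 i g p := by
  simp [pd2, fderiv_fun_sub hf hg]

lemma pd2_mul {f g : Pt2 → ℝ} {p : Pt2} (hf : DifferentiableAt ℝ f p)
    (hg : DifferentiableAt ℝ g p) (i : Fin 2) :
    pd2 i (fun q => f q * g q) p = f p * pd2 i g p + g p * pd2 i f p := by
  simp [pd2, fderiv_fun_mul hf hg]

lemma contDiffOn_pd2 {U : Set Pt2} (hU : IsOpen U) {f : Pt2 → ℝ}
    (hf : ContDiffOn ℝ (⊤:ℕ∞) f U) (i : Fin 2) : ContDiffOn ℝ (⊤:ℕ∞) (pd2 i f) U :=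
  (hf.fderiv_of_isOpen hU aux_infty_add_one).clm_apply
    (contDiffOn_const (c := (Pi.single i 1 : Pt2)))

lemma diffAt_of_cdOn {F : Type*} [NormedAddCommGroup F] [NormedSpace ℝ F]
    {U : Set Pt2} (hU : IsOpen U) {f : Pt2 → F}
    (hf : ContDiffOn ℝ (⊤:ℕ∞) f U) {p : Pt2} (hp : p ∈ U) : DifferentiableAt ℝ f p :=
  (hf.contDiffAt (hU.mem_nhds hp)).differentiableAt (by norm_cast)

/-- Schwarz symmetry of second partials for a `C^∞` function on an open set. -/
lemma pd2_comm {U : Set Pt2} (hU : IsOpen U) {f : Pt2 → ℝ}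
    (hf : ContDiffOn ℝ (⊤:ℕ∞) f U) {p : Pt2} (hp : p ∈ U) (a c : Fin 2) :
    pd2 c (pd2 a f) p = pd2 a (pd2 c f) p := by
  have hsymm : IsSymmSndFDerivAt ℝ f p :=
    (hf.contDiffAt (hU.mem_nhds hp)).isSymmSndFDerivAt (by rw [minSmoothness_of_isRCLikeNormedField]; norm_cast)
  have hdf : DifferentiableAt ℝ (fderiv ℝ f) p :=
    diffAt_of_cdOn hU (hf.fderiv_of_isOpen hU aux_infty_add_one) hp
  have expand : ∀ (u v : Pt2),
      fderiv ℝ (fun q => fderiv ℝ f q v) p u = fderiv ℝ (fderiv ℝ f) p u v := by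
    intro u v
    rw [fderiv_clm_apply hdf (differentiableAt_const v)]
    simp
  show fderiv ℝ (fun q => fderiv ℝ f q (Pi.single a 1)) p (Pi.single c 1)
      = fderiv ℝ (fun q => fderiv ℝ f q (Pi.single c 1)) p (Pi.single a 1)
  rw [expand, expand]
  exact hsymm.eq _ _

/-- On a connected affine surface whose Ricci tensor is symmetric,
projectively flat (`(D_{∂_1}ρ)(∂_2,∂_k) = (D_{∂_2}ρ)(∂_1,∂_k)`), and non-degenerate,
every affine gradient Ricci soliton is trivial: the potential function is constant. -/
theorem stmt6 (U : Set Pt2) (hU : IsOpen U) (hUconn : IsConnected U)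
    (Γ : Fin 2 → Fin 2 → Fin 2 → Pt2 → ℝ)
    (hΓsmooth : ∀ k i j, ContDiffOn ℝ (⊤ : ℕ∞) (Γ k i j) U)
    (hΓsym : ∀ k i j, Γ k i j = Γ k j i)
    (hρsym : ∀ p ∈ U, ricciD Γ 0 1 p = ricciD Γ 1 0 p)
    (hpflat : ∀ p ∈ U, ∀ k : Fin 2, covRicciD Γ 0 1 k p = covRicciD Γ 1 0 k p)
    (hnondeg : ∀ p ∈ U,
      ricciD Γ 0 0 p * ricciD Γ 1 1 p - ricciD Γ 0 1 p * ricciD Γ 1 0 p ≠ 0)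
    (h : Pt2 → ℝ) (hh : ContDiffOn ℝ (⊤ : ℕ∞) h U)
    (hsol : ∀ p ∈ U, ∀ i j : Fin 2, hessD Γ h i j p + 2 * ricciDSym Γ i j p = 0) :
    ∃ c : ℝ, ∀ p ∈ U, h p = c := by
  have hΓ : ∀ k i j, ContDiffOn ℝ (⊤:ℕ∞) (Γ k i j) U := fun k i j => (hΓsmooth k i j).of_le (by simp)
  have hhs : ContDiffOn ℝ (⊤:ℕ∞) h U := hh.of_le (by simp)
  have cdω : ∀ m, ContDiffOn ℝ (⊤:ℕ∞) (pd2 m h) U := fun m => contDiffOn_pd2 hU hhs m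
  have cdρ : ∀ a b : Fin 2, ContDiffOn ℝ (⊤:ℕ∞) (fun q => ricciD Γ a b q) U := by
    intro a b
    simp only [ricciD, Fin.sum_univ_two]
    refine ContDiffOn.add (ContDiffOn.sub ?_ ?_) ?_
    · exact (contDiffOn_pd2 hU (hΓ 0 a b) 0).add (contDiffOn_pd2 hU (hΓ 1 a b) 1)
    · exact contDiffOn_pd2 hU ((hΓ 0 0 b).add (hΓ 1 1 b)) a
    · refine ContDiffOn.add ?_ ?_ <;> refine ContDiffOn.add ?_ ?_ <;>
        refine ContDiffOn.sub ((hΓ _ _ _).mul (hΓ _ _ _)) ((hΓ _ _ _).mul (hΓ _ _ _))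
  have key : ∀ p ∈ U, pd2 0 h p = 0 ∧ pd2 1 h p = 0 := by
    intro p hp
    have dΓ : ∀ k i j, DifferentiableAt ℝ (Γ k i j) p := fun k i j =>
      diffAt_of_cdOn hU (hΓ k i j) hp
    have dω : ∀ m, DifferentiableAt ℝ (pd2 m h) p := fun m => diffAt_of_cdOn hU (cdω m) hp
    have dρ : ∀ a b : Fin 2, DifferentiableAt ℝ (fun q => ricciD Γ a b q) p := fun a b =>
      diffAt_of_cdOn hU (cdρ a b) hp
    have hsolval : ∀ q ∈ U, ∀ a b : Fin 2, pd2 a (pd2 b h) q =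
        Γ 0 a b q * pd2 0 h q + Γ 1 a b q * pd2 1 h q
          - (ricciD Γ a b q + ricciD Γ b a q) := by
      intro q hq a b
      have hs := hsol q hq a b
      simp only [hessD, ricciDSym, Fin.sum_univ_two] at hs
      linarith
    have hsolp : ∀ c m : Fin 2, pd2 c (pd2 m h) p =
        Γ 0 c m p * pd2 0 h p + Γ 1 c m p * pd2 1 h p
          - (ricciD Γ c m p + ricciD Γ m c p) := fun c m => hsolval p hp c m
    have hdd : ∀ c a b : Fin 2, pd2 c (pd2 a (pd2 b h)) p =
        Γ 0 a b p * pd2 c (pd2 0 h) p + pd2 0 h p * pd2 c (Γ 0 a b) p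
        + (Γ 1 a b p * pd2 c (pd2 1 h) p + pd2 1 h p * pd2 c (Γ 1 a b) p)
        - (pd2 c (fun q => ricciD Γ a b q) p + pd2 c (fun q => ricciD Γ b a q) p) := by
      intro c a b
      have congrstep : pd2 c (pd2 a (pd2 b h)) p = pd2 c (fun q =>
          Γ 0 a b q * pd2 0 h q + Γ 1 a b q * pd2 1 h q
            - (ricciD Γ a b q + ricciD Γ b a q)) p :=
        pd2_congrOn hU (fun q hq => hsolval q hq a b) hp c
      rw [congrstep,
        pd2_sub (f := fun q => Γ 0 a b q * pd2 0 h q + Γ 1 a b q * pd2 1 h q)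
          (g := fun q => ricciD Γ a b q + ricciD Γ b a q)
          (((dΓ 0 a b).mul (dω 0)).add ((dΓ 1 a b).mul (dω 1))) ((dρ a b).add (dρ b a)),
        pd2_add (f := fun q => Γ 0 a b q * pd2 0 h q) (g := fun q => Γ 1 a b q * pd2 1 h q)
          ((dΓ 0 a b).mul (dω 0)) ((dΓ 1 a b).mul (dω 1)),
        pd2_mul (dΓ 0 a b) (dω 0), pd2_mul (dΓ 1 a b) (dω 1),
        pd2_add (dρ a b) (dρ b a)]
    have hsw : ∀ b : Fin 2, pd2 0 (pd2 1 (pd2 b h)) p = pd2 1 (pd2 0 (pd2 b h)) p :=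
      fun b => pd2_comm hU (cdω b) hp 1 0
    have hD : ∀ c : Fin 2, pd2 c (fun q => ricciD Γ 0 1 q) p
        = pd2 c (fun q => ricciD Γ 1 0 q) p :=
      fun c => pd2_congrOn hU (fun q hq => hρsym q hq) hp c
    have hF0 := hpflat p hp 0
    have hF1 := hpflat p hp 1
    simp only [covRicciD, Fin.sum_univ_two] at hF0 hF1
    have hr : ∀ a b : Fin 2, ricciD Γ a b p =
        pd2 0 (Γ 0 a b) p + pd2 1 (Γ 1 a b) p - (pd2 a (Γ 0 0 b) p + pd2 a (Γ 1 1 b) p)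
        + (Γ 0 0 0 p * Γ 0 a b p - Γ 0 a 0 p * Γ 0 0 b p
         + (Γ 0 0 1 p * Γ 1 a b p - Γ 0 a 1 p * Γ 1 0 b p)
         + (Γ 1 1 0 p * Γ 0 a b p - Γ 1 a 0 p * Γ 0 1 b p
         + (Γ 1 1 1 p * Γ 1 a b p - Γ 1 a 1 p * Γ 1 1 b p))) := by
      intro a b
      simp only [ricciD, Fin.sum_univ_two]
      rw [pd2_add (dΓ 0 0 b) (dΓ 1 1 b)]
    have hSp := hρsym p hp
    have hΓnorm : ∀ k, Γ k 1 0 = Γ k 0 1 := fun k => hΓsym k 1 0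
    have hdd01_0 := hdd 0 1 0
    have hdd10_0 := hdd 1 0 0
    have hdd01_1 := hdd 0 1 1
    have hdd10_1 := hdd 1 0 1
    have hsolp00 := hsolp 0 0
    have hsolp01 := hsolp 0 1
    have hsolp10 := hsolp 1 0
    have hsolp11 := hsolp 1 1
    have hr00 := hr 0 0
    have hr01 := hr 0 1
    have hr10 := hr 1 0
    have hr11 := hr 1 1
    simp only [hΓnorm] at hdd01_0 hdd10_0 hdd01_1 hdd10_1 hsolp00 hsolp01 hsolp10 hsolp11 hr00 hr01 hr10 hr11 hF0 hF1
    have key0 : ricciD Γ 1 0 p * pd2 0 h p - ricciD Γ 0 0 p * pd2 1 h p = 0 := by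
      linear_combination (hsw 0) - hdd01_0 + hdd10_0
        - Γ 0 0 1 p * hsolp00 - Γ 1 0 1 p * hsolp01
        + Γ 0 0 0 p * hsolp10 + Γ 1 0 0 p * hsolp11
        + 2 * hF0 + hD 0 - (Γ 0 0 0 p + Γ 1 0 1 p) * hSp
        + pd2 0 h p * hr10 - pd2 1 h p * hr00
    have key1 : ricciD Γ 1 1 p * pd2 0 h p - ricciD Γ 0 1 p * pd2 1 h p = 0 := by
      linear_combination (hsw 1) - hdd01_1 + hdd10_1
        - Γ 0 1 1 p * hsolp00 - Γ 1 1 1 p * hsolp01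
        + Γ 0 0 1 p * hsolp10 + Γ 1 0 1 p * hsolp11
        + 2 * hF1 + hD 1 - (Γ 0 0 1 p + Γ 1 1 1 p) * hSp
        + pd2 0 h p * hr11 - pd2 1 h p * hr01
    have hdet := hnondeg p hp
    constructor
    · have hz : (ricciD Γ 0 0 p * ricciD Γ 1 1 p - ricciD Γ 0 1 p * ricciD Γ 1 0 p)
          * pd2 0 h p = 0 := by
        linear_combination ricciD Γ 0 0 p * key1 - ricciD Γ 0 1 p * key0
      exact (mul_eq_zero.mp hz).resolve_left hdet
    · have hz : (ricciD Γ 0 0 p * ricciD Γ 1 1 p - ricciD Γ 0 1 p * ricciD Γ 1 0 p)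
          * pd2 1 h p = 0 := by
        linear_combination (- ricciD Γ 1 1 p) * key0 + ricciD Γ 1 0 p * key1
      exact (mul_eq_zero.mp hz).resolve_left hdet
  -- From vanishing gradient to constancy
  have hfd : ∀ p ∈ U, fderiv ℝ h p = 0 := by
    intro p hp
    obtain ⟨k0, k1⟩ := key p hp
    unfold pd2 at k0 k1
    apply ContinuousLinearMap.ext
    intro v
    have hv : v = v 0 • (Pi.single 0 1 : Pt2) + v 1 • (Pi.single 1 1 : Pt2) := by
      funext j
      fin_cases j <;> simp [Pi.single_apply]
    rw [hv]
    simp [map_add, map_smul, k0, k1]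
  have hloc : ∀ p ∈ U, ∀ᶠ q in nhds p, h q = h p := by
    intro p hp
    obtain ⟨ε, hε, hball⟩ := Metric.isOpen_iff.mp hU p hp
    have hconv : Convex ℝ (Metric.ball p ε) := convex_ball p ε
    have hdiff : DifferentiableOn ℝ h (Metric.ball p ε) :=
      (hhs.mono hball).differentiableOn (by norm_cast)
    have hz : ∀ q ∈ Metric.ball p ε, fderivWithin ℝ h (Metric.ball p ε) q = 0 := by
      intro q hq
      rw [fderivWithin_of_isOpen Metric.isOpen_ball hq]
      exact hfd q (hball hq)
    filter_upwards [Metric.ball_mem_nhds p hε] with q hq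
    exact hconv.is_const_of_fderivWithin_eq_zero hdiff hz hq (Metric.mem_ball_self hε)
  obtain ⟨p₀, hp₀⟩ := hUconn.nonempty
  refine ⟨h p₀, ?_⟩
  have hA : IsOpen {q | q ∈ U ∧ h q = h p₀} := by
    rw [isOpen_iff_mem_nhds]
    rintro q ⟨hqU, hqv⟩
    filter_upwards [hloc q hqU, hU.mem_nhds hqU] with x hx hxU
    exact ⟨hxU, by rw [hx, hqv]⟩
  have hB : IsOpen {q | q ∈ U ∧ h q ≠ h p₀} := by
    rw [isOpen_iff_mem_nhds]
    rintro q ⟨hqU, hqv⟩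
    filter_upwards [hloc q hqU, hU.mem_nhds hqU] with x hx hxU
    exact ⟨hxU, by rw [hx]; exact hqv⟩
  have hsub : U ⊆ {q | q ∈ U ∧ h q = h p₀} :=
    hUconn.isPreconnected.subset_left_of_subset_union hA hB
      (Set.disjoint_left.mpr (fun x hx hx' => hx'.2 hx.2))
      (fun q hq => by by_cases hc : h q = h p₀
                      exacts [Or.inl ⟨hq, hc⟩, Or.inr ⟨hq, hc⟩])
      ⟨p₀, hp₀, ⟨hp₀, rfl⟩⟩
  exact fun p hp => (hsub hp).2

end
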